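/- Let n ≥ 1 and let D be a real symmetric n×n matrix. Then D is a Euclidean distance matrix — i.e., there exist points x₁, …, xₙ ∈ ℝⁿ (the Euclidean space of dimension n) such that Dᵢⱼ = ‖xᵢ − xⱼ‖₂² for all i, j — if and only if −C D C is positive semidefinite and Dᵢᵢ = 0 for all i. -/

import Mathlib

open Matrix BigOperators

/-- Positive semidefiniteness: zᵀ M z ≥ 0 for all z ∈ ℝⁿ. -/
def PSD (n : ℕ) (M : Matrix (Fin n) (Fin n) ℝ) : Prop :=
  ∀ z : Fin n → ℝ, 0 ≤ z ⬝ᵥ (M *ᵥ z)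

/-- The centering matrix C = Iₙ − (1/n)·𝟏𝟏ᵀ. -/
noncomputable def Cmat (n : ℕ) : Matrix (Fin n) (Fin n) ℝ :=
  1 - ((n : ℝ)⁻¹) • Matrix.vecMulVec (fun _ => 1) (fun _ => 1)

/-!
Double centering `M ↦ C M C` annihilates the rank-one matrices `r 𝟏ᵀ` and `𝟏 rᵀ`, and it fixes
every vector with coordinate sum zero, in particular `eᵢ - eⱼ`, so it preserves the quantities
`Mᵢᵢ - Mᵢⱼ - Mⱼᵢ + Mⱼⱼ = (eᵢ - eⱼ)ᵀ M (eᵢ - eⱼ)`.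

If `Dᵢⱼ = ‖xᵢ - xⱼ‖²` then `D = r 𝟏ᵀ + 𝟏 rᵀ - 2 G` with `rᵢ = ‖xᵢ‖²` and `G` the Gram matrix of
the points, hence `-C D C = 2 C G C ⪰ 0`. Conversely, if `-C D C ⪰ 0`, then `-½ C D C` is the Gram
matrix of some points of `ℝⁿ`, and their squared distances `Gᵢᵢ - Gᵢⱼ - Gⱼᵢ + Gⱼⱼ` equal
`-½ (Dᵢᵢ - Dᵢⱼ - Dⱼᵢ + Dⱼⱼ) = Dᵢⱼ` because `D` is symmetric with zero diagonal.
-/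

lemma Cmat_transpose (n : ℕ) : (Cmat n)ᵀ = Cmat n := by
  simp [Cmat, transpose_vecMulVec]

lemma Cmat_mulVec (n : ℕ) (v : Fin n → ℝ) :
    Cmat n *ᵥ v = v - ((n : ℝ)⁻¹ * ∑ i, v i) • 1 := by
  ext i
  simp [Cmat, sub_mulVec, smul_mulVec, vecMulVec_mulVec, dotProduct, mul_comm]

lemma Cmat_mulVec_of_sum_eq_zero {n : ℕ} {v : Fin n → ℝ} (hv : ∑ i, v i = 0) :
    Cmat n *ᵥ v = v := by
  simp [Cmat_mulVec, hv]

lemma Cmat_mulVec_one {n : ℕ} (hn : n ≠ 0) : Cmat n *ᵥ 1 = 0 := by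
  simp [Cmat_mulVec, hn]

lemma one_vecMul_Cmat {n : ℕ} (hn : n ≠ 0) : 1 ᵥ* Cmat n = 0 := by
  rw [← mulVec_transpose, Cmat_transpose, Cmat_mulVec_one hn]

lemma dotProduct_Cmat_mul_mul_Cmat_mulVec_of_sum_eq_zero {n : ℕ} (M : Matrix (Fin n) (Fin n) ℝ)
    {v : Fin n → ℝ} (hv : ∑ i, v i = 0) :
    v ⬝ᵥ (Cmat n * M * Cmat n) *ᵥ v = v ⬝ᵥ M *ᵥ v := by
  rw [← mulVec_mulVec, ← mulVec_mulVec, Cmat_mulVec_of_sum_eq_zero hv, dotProduct_mulVec,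
    ← mulVec_transpose, Cmat_transpose, Cmat_mulVec_of_sum_eq_zero hv]

lemma single_sub_single_dotProduct_mulVec {R ι : Type*} [CommRing R] [Fintype ι]
    [DecidableEq ι] (M : Matrix ι ι R) (i j : ι) :
    (Pi.single i 1 - Pi.single j 1) ⬝ᵥ M *ᵥ (Pi.single i 1 - Pi.single j 1) =
      M i i - M i j - M j i + M j j := by
  simp only [mulVec_sub, mulVec_single, MulOpposite.op_one, one_smul, dotProduct_sub,
    sub_dotProduct, single_dotProduct, col_apply, one_mul]
  ring

lemma Cmat_mul_mul_Cmat_apply_sub_add {n : ℕ} (M : Matrix (Fin n) (Fin n) ℝ) (i j : Fin n) :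
    (Cmat n * M * Cmat n) i i - (Cmat n * M * Cmat n) i j - (Cmat n * M * Cmat n) j i
      + (Cmat n * M * Cmat n) j j = M i i - M i j - M j i + M j j := by
  have hsum : ∑ k, (Pi.single i 1 - Pi.single j 1 : Fin n → ℝ) k = 0 := by simp
  rw [← single_sub_single_dotProduct_mulVec, ← single_sub_single_dotProduct_mulVec,
    dotProduct_Cmat_mul_mul_Cmat_mulVec_of_sum_eq_zero M hsum]

lemma Matrix.IsSymm.Cmat_mul_mul_Cmat {n : ℕ} {M : Matrix (Fin n) (Fin n) ℝ} (hM : M.IsSymm) :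
    (Cmat n * M * Cmat n).IsSymm := by
  rw [IsSymm, transpose_mul, transpose_mul, Cmat_transpose, hM.eq, Matrix.mul_assoc]

lemma Matrix.PosSemidef.psd {n : ℕ} {M : Matrix (Fin n) (Fin n) ℝ} (hM : M.PosSemidef) :
    PSD n M :=
  fun z => by simpa using hM.dotProduct_mulVec_nonneg z

lemma PSD.posSemidef {n : ℕ} {M : Matrix (Fin n) (Fin n) ℝ} (hM : PSD n M) (hsymm : M.IsSymm) :
    M.PosSemidef :=
  posSemidef_iff_dotProduct_mulVec.mpr ⟨hsymm, fun z => by simpa using hM z⟩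

open scoped ComplexOrder MatrixOrder Matrix.Norms.L2Operator in
lemma Matrix.PosSemidef.exists_eq_gram {𝕜 ι : Type*} [RCLike 𝕜] [Fintype ι]
    {A : Matrix ι ι 𝕜} (hA : A.PosSemidef) : ∃ x : ι → EuclideanSpace 𝕜 ι, A = gram 𝕜 x := by
  classical
  obtain ⟨B, rfl⟩ := CStarAlgebra.nonneg_iff_eq_star_mul_self.mp hA.nonneg
  refine ⟨fun j => WithLp.toLp 2 fun k => B k j, ?_⟩
  ext i j
  simp [gram_apply, mul_apply, PiLp.inner_apply, mul_comm]

section SquaredDistances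

variable {E : Type*} [NormedAddCommGroup E] [InnerProductSpace ℝ E]

lemma norm_sub_sq_eq_gram {ι : Type*} (x : ι → E) (i j : ι) :
    ‖x i - x j‖ ^ 2 = gram ℝ x i i - gram ℝ x i j - gram ℝ x j i + gram ℝ x j j := by
  simp only [gram_apply, norm_sub_sq_real, real_inner_self_eq_norm_sq, real_inner_comm (x i)]
  ring

lemma of_norm_sub_sq_eq_gram {ι : Type*} (x : ι → E) :
    (of fun i j => ‖x i - x j‖ ^ 2) =
      vecMulVec (fun i => ‖x i‖ ^ 2) 1 + vecMulVec 1 (fun j => ‖x j‖ ^ 2) - (2 : ℝ) • gram ℝ x := by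
  ext i j
  simp only [of_apply, Matrix.sub_apply, Matrix.add_apply, vecMulVec_apply, Pi.one_apply, mul_one,
    one_mul, Matrix.smul_apply, gram_apply, smul_eq_mul, norm_sub_sq_real]
  ring

lemma Cmat_mul_of_norm_sub_sq_mul_Cmat {n : ℕ} (hn : n ≠ 0) (x : Fin n → E) :
    Cmat n * (of fun i j => ‖x i - x j‖ ^ 2) * Cmat n =
      -(2 : ℝ) • (Cmat n * gram ℝ x * Cmat n) := by
  simp only [of_norm_sub_sq_eq_gram, mul_add, add_mul, mul_sub, sub_mul, mul_vecMulVec,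
    vecMulVec_mul, Cmat_mulVec_one hn, one_vecMul_Cmat hn, vecMulVec_zero, zero_vecMulVec,
    Matrix.mul_smul, Matrix.smul_mul]
  simp

lemma posSemidef_neg_Cmat_mul_of_norm_sub_sq_mul_Cmat {n : ℕ} (hn : n ≠ 0) (x : Fin n → E) :
    (-(Cmat n * (of fun i j => ‖x i - x j‖ ^ 2) * Cmat n)).PosSemidef := by
  rw [Cmat_mul_of_norm_sub_sq_mul_Cmat hn, neg_smul, neg_neg]
  have hC := (posSemidef_gram ℝ x).mul_mul_conjTranspose_same (Cmat n)
  rw [conjTranspose_eq_transpose_of_trivial, Cmat_transpose] at hC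
  exact hC.smul zero_le_two

end SquaredDistances

/-- Theorem 2 of the paper (Schoenberg's characterization of Euclidean
    distance matrices). -/
theorem euclidean_distance_matrix_iff (n : ℕ) (hn : 1 ≤ n)
    (D : Matrix (Fin n) (Fin n) ℝ) (hsymm : D.IsSymm) :
    (∃ x : Fin n → EuclideanSpace ℝ (Fin n),
        ∀ i j, D i j = ‖x i - x j‖ ^ 2) ↔
      (PSD n (-(Cmat n * D * Cmat n)) ∧ ∀ i, D i i = 0) := by
  constructor
  · rintro ⟨x, hx⟩
    obtain rfl : D = of fun i j => ‖x i - x j‖ ^ 2 := ext fun i j => by rw [hx, of_apply]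
    exact ⟨(posSemidef_neg_Cmat_mul_of_norm_sub_sq_mul_Cmat (by omega) x).psd, fun i => by simp⟩
  · rintro ⟨hpsd, hdiag⟩
    have hG : ((2 : ℝ)⁻¹ • -(Cmat n * D * Cmat n)).PosSemidef :=
      (hpsd.posSemidef hsymm.Cmat_mul_mul_Cmat.neg).smul (by norm_num)
    obtain ⟨x, hx⟩ := hG.exists_eq_gram
    refine ⟨x, fun i j => ?_⟩
    have hcentered := Cmat_mul_mul_Cmat_apply_sub_add D i j
    rw [norm_sub_sq_eq_gram, ← hx]
    simp only [Matrix.smul_apply, Matrix.neg_apply, smul_eq_mul, hdiag, hsymm.apply j i]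
      at hcentered ⊢
    linarith
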